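/- Let R be a commutative ring, a ∈ R, k > 0 an even integer, ∂ = d/dz and D_a = (z−a)∂ on R[z] (or on the localization of R[z] at (z−a)). Then as operators, (z−a)^{(k+2)/2} ∘ ∂^{k+1} ∘ (multiplication by (z−a)^{k/2}) = D_a · ∏_{j=1}^{k/2} (D_a² − j²), i.e. for every f, (z−a)^{(k+2)/2}·∂^{k+1}((z−a)^{k/2}·f) = D_a(D_a²−1²)(D_a²−2²)⋯(D_a²−(k/2)²) f. -/
import Mathlib


open Polynomial

/-- The operator `D_a = (z - a)·∂` on `R[z]`. -/
noncomputable def Da {R : Type*} [CommRing R] (a : R) (f : Polynomial R) : Polynomial R :=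
  (X - C a) * derivative f

/-- The operator `D_a² - j² = (D_a - j)(D_a + j)` applied to `f`. -/
noncomputable def sqFactor {R : Type*} [CommRing R] (a : R) (j : ℕ)
    (f : Polynomial R) : Polynomial R :=
  Da a (Da a f + j • f) - j • (Da a f + j • f)

/-- The product `D_a·∏_{j=1}^{m}(D_a² - j²)` applied to `f`
(the factor `D_a² - m²` is applied first; all factors commute). -/
noncomputable def sqProd {R : Type*} [CommRing R] (a : R) : ℕ → Polynomial R → Polynomial R
  | 0, f => Da a f
  | m + 1, f => sqProd a m (sqFactor a (m + 1) f)

section Aux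

variable {R : Type*} [CommRing R] (a : R)

/-- `D_a` as a linear endomorphism. -/
noncomputable def DaL : Module.End R (Polynomial R) :=
  (LinearMap.mulLeft R (X - C a)).comp (derivative : Polynomial R →ₗ[R] Polynomial R)

lemma DaL_apply (f : Polynomial R) : DaL a f = Da a f := rfl

lemma aeval_mul_apply (p q : Polynomial ℤ) (f : Polynomial R) :
    aeval (DaL a) (p * q) f = aeval (DaL a) p (aeval (DaL a) q f) := by
  rw [map_mul]; rfl

lemma aeval_add_apply (j : ℕ) (f : Polynomial R) :
    aeval (DaL a) (X + C (j : ℤ)) f = Da a f + j • f := by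
  simp [map_add, DaL_apply, algebraMap_int_eq, Module.End.intCast_apply, natCast_zsmul]

lemma aeval_sub_apply (j : ℕ) (f : Polynomial R) :
    aeval (DaL a) (X - C (j : ℤ)) f = Da a f - j • f := by
  simp [map_sub, DaL_apply, algebraMap_int_eq, Module.End.intCast_apply, natCast_zsmul,
    sub_eq_add_neg]

lemma sqProd_eq (m : ℕ) (f : Polynomial R) :
    sqProd a m f =
      aeval (DaL a)
        (X * ∏ j ∈ Finset.range m, ((X - C ((j : ℤ) + 1)) * (X + C ((j : ℤ) + 1)))) f := by
  induction m generalizing f with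
  | zero => simp [sqProd, DaL_apply]
  | succ n ih =>
    have h1 : sqFactor a (n + 1) f =
        aeval (DaL a) ((X - C ((n : ℤ) + 1)) * (X + C ((n : ℤ) + 1))) f := by
      rw [aeval_mul_apply]
      have : ((n : ℤ) + 1) = ((n + 1 : ℕ) : ℤ) := by push_cast; ring
      rw [this, aeval_add_apply, aeval_sub_apply, sqFactor]
    show sqProd a n (sqFactor a (n + 1) f) = _
    rw [h1, ih, ← aeval_mul_apply]
    congr 1
    rw [Finset.prod_range_succ, mul_assoc]

lemma pos_part (n : ℕ) (f : Polynomial R) :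
    (⇑(derivative (R := R)))^[n] ((X - C a) ^ n * f) =
      aeval (DaL a) (∏ j ∈ Finset.range n, (X + C ((j : ℤ) + 1))) f := by
  induction n generalizing f with
  | zero => simp
  | succ n ih =>
    have hd : derivative ((X - C a) ^ (n + 1) * f)
        = (X - C a) ^ n * (Da a f + (n + 1) • f) := by
      rw [derivative_mul, derivative_pow]
      simp only [derivative_sub, derivative_X, derivative_C, sub_zero, mul_one, Da,
        nsmul_eq_mul, Nat.add_sub_cancel, Polynomial.C_eq_natCast]
      ring
    have hcast : ((n : ℤ) + 1) = ((n + 1 : ℕ) : ℤ) := by push_cast; ring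
    rw [Function.iterate_succ_apply, hd, ih, Finset.prod_range_succ, hcast,
      aeval_mul_apply, aeval_add_apply]

lemma xsub_mul_deriv_pow (n : ℕ) :
    (X - C a) * derivative ((X - C a) ^ n) = n • (X - C a) ^ n := by
  cases n with
  | zero => simp
  | succ k =>
    rw [derivative_pow]
    simp only [derivative_sub, derivative_X, derivative_C, sub_zero, mul_one,
      Nat.add_sub_cancel, nsmul_eq_mul, Polynomial.C_eq_natCast]
    ring

lemma neg_part (n : ℕ) (g : Polynomial R) :
    (X - C a) ^ n * ((⇑(derivative (R := R)))^[n] g) =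
      aeval (DaL a) (∏ j ∈ Finset.range n, (X - C (j : ℤ))) g := by
  induction n with
  | zero => simp
  | succ n ih =>
    have : (∏ j ∈ Finset.range (n + 1), (X - C (j : ℤ)))
        = (X - C (n : ℤ)) * ∏ j ∈ Finset.range n, (X - C (j : ℤ)) := by
      rw [Finset.prod_range_succ]; ring
    rw [this, aeval_mul_apply, ← ih, aeval_sub_apply, Da, Function.iterate_succ_apply',
      derivative_mul, mul_add, ← mul_assoc (X - C a), xsub_mul_deriv_pow]
    simp only [nsmul_eq_mul]
    ring

end Aux

/-- For `k = 2m > 0` even: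
`(z-a)^{(k+2)/2}·∂^{k+1}((z-a)^{k/2}·f) = D_a(D_a²-1²)⋯(D_a²-(k/2)²) f`. -/
theorem theta_operator_log_coords {R : Type*} [CommRing R] (a : R) (k m : ℕ)
    (hk : k = 2 * m) (hk0 : 0 < k) (f : Polynomial R) :
    (X - C a) ^ (m + 1) * ((⇑(derivative (R := R)))^[k + 1] ((X - C a) ^ m * f)) =
      sqProd a m f := by
  subst hk
  have h21 : 2 * m + 1 = (m + 1) + m := by ring
  rw [h21, Function.iterate_add_apply, pos_part a m f, neg_part a (m + 1) _,
    ← aeval_mul_apply, sqProd_eq]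
  congr 1
  rw [Finset.prod_range_succ']
  simp only [Nat.cast_add, Nat.cast_one, Nat.cast_zero, map_zero, sub_zero]
  rw [Finset.prod_mul_distrib,
    mul_comm (∏ x ∈ Finset.range m, (X - C ((x : ℤ) + 1))) X, mul_assoc]
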